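/- Let μ and ν be absolutely continuous probability measures on ℝ^d with positive densities f and g respectively, and let Q = ∇ψ be the gradient of a convex function ψ pushing μ forward to ν. Define ρ_Q(A) := Lebesgue measure of Q(A) for Borel sets A. Then ρ_Q satisfies the Monge-Ampère equation ρ_Q(A) = ∫_A f(x)/g(Q(x)) dx for every Borel set A. -/

import Mathlib

/-!
A slope `p` that is a subgradient of the (real-valued) `ψ` at two points `x ≠ y` has both in
`∂ψ*(p)`, so the convex conjugate `ψ*` is not differentiable at `p` or `p` lies on the boundary
of its domain; both sets are Lebesgue-null (Rademacher's theorem for the locally Lipschitz `ψ*`,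
and boundaries of convex sets are null). Hence `Q` is injective off `Q⁻¹ N` for a null set `N`,
and `Q⁻¹ N` is itself null because `μ` and Lebesgue measure have the same null sets. On a
measurable `Z` where `Q` is injective, `Q '' Z` is Borel (Lusin–Souslin) with preimage `Z`, so
`Leb (Q '' Z) = ∫_{Q '' Z} 1/g dν = ∫_Z 1/g∘Q dμ = ∫_Z f/g∘Q`.
-/

open scoped RealInnerProductSpace
open Filter

noncomputable section

abbrev E (d : ℕ) : Type := EuclideanSpace ℝ (Fin d)

/-- Subdifferential of a real-valued function at a point. -/
def subdiffR {d : ℕ} (f : E d → ℝ) (x : E d) : Set (E d) :=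
  {ξ | ∀ y : E d, f x + ⟪ξ, y - x⟫ ≤ f y}

/-- Subdifferential of an `EReal`-valued function at a point. -/
def subdiffE {d : ℕ} (f : E d → EReal) (x : E d) : Set (E d) :=
  {ξ | ∀ y : E d, f x + ((⟪ξ, y - x⟫ : ℝ) : EReal) ≤ f y}

/-- Convexity of an `EReal`-valued function. -/
def ConvexE {d : ℕ} (f : E d → EReal) : Prop :=
  ∀ x y : E d, ∀ a b : ℝ, 0 ≤ a → 0 ≤ b → a + b = 1 →
    f (a • x + b • y) ≤ (a : EReal) * f x + (b : EReal) * f y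
open MeasureTheory

open Set Topology

section Subgradient

variable {V : Type*} [NormedAddCommGroup V] [InnerProductSpace ℝ V]

theorem fderiv_eq_innerSL_of_eventually_subgradient {F : V → ℝ} {p x : V}
    (hF : DifferentiableAt ℝ F p) (hx : ∀ᶠ q in 𝓝 p, F p + ⟪x, q - p⟫ ≤ F q) :
    fderiv ℝ F p = innerSL ℝ x := by
  have hmin : IsLocalMin (fun q => F q - innerSL ℝ x q) p := by
    filter_upwards [hx] with q hq
    simp only [innerSL_apply_apply, inner_sub_right] at hq ⊢
    linarith
  exact sub_eq_zero.mp (hmin.hasFDerivAt_eq_zero (hF.hasFDerivAt.sub (innerSL ℝ x).hasFDerivAt))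

theorem eq_of_eventually_subgradient_of_differentiableAt {F : V → ℝ} {p x y : V}
    (hF : DifferentiableAt ℝ F p) (hx : ∀ᶠ q in 𝓝 p, F p + ⟪x, q - p⟫ ≤ F q)
    (hy : ∀ᶠ q in 𝓝 p, F p + ⟪y, q - p⟫ ≤ F q) : x = y :=
  innerSL_inj.mp <| (fderiv_eq_innerSL_of_eventually_subgradient hF hx).symm.trans
    (fderiv_eq_innerSL_of_eventually_subgradient hF hy)

end Subgradient

section Rademacher

variable {V W : Type*} [NormedAddCommGroup V] [NormedSpace ℝ V] [FiniteDimensional ℝ V]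
  [MeasurableSpace V] [BorelSpace V] [NormedAddCommGroup W] [NormedSpace ℝ W]
  [FiniteDimensional ℝ W] {μ : Measure V} [μ.IsAddHaarMeasure]

theorem LocallyLipschitzOn.ae_differentiableAt_of_mem {f : V → W} {s : Set V} (hs : IsOpen s)
    (hf : LocallyLipschitzOn s f) : ∀ᵐ x ∂μ, x ∈ s → DifferentiableAt ℝ f x := by
  rw [ae_iff]
  refine measure_null_of_locally_null _ fun x hx => ?_
  obtain ⟨hxs, -⟩ := Classical.not_imp.mp hx
  obtain ⟨K, t, ht, hK⟩ := hf hxs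
  rw [hs.nhdsWithin_eq hxs] at ht
  refine ⟨_, inter_mem_nhdsWithin _ (interior_mem_nhds.mpr ht), ?_⟩
  have hnull := ae_iff.mp ((hK.mono interior_subset).ae_differentiableWithinAt_of_mem (μ := μ))
  refine measure_mono_null (fun y hy => ?_) hnull
  exact fun hdiff => hy.1 fun _ => (hdiff hy.2).differentiableAt (isOpen_interior.mem_nhds hy.2)

theorem ConvexOn.ae_differentiableAt_of_mem_interior {f : V → ℝ} {C : Set V}
    (hf : ConvexOn ℝ C f) : ∀ᵐ x ∂μ, x ∈ interior C → DifferentiableAt ℝ f x :=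
  hf.locallyLipschitzOn_interior.ae_differentiableAt_of_mem isOpen_interior

end Rademacher

section ConvexConjugate

variable {V : Type*} [NormedAddCommGroup V] [InnerProductSpace ℝ V]

def conjugateDomain (φ : V → ℝ) : Set V :=
  {p | BddAbove (range fun y => ⟪p, y⟫ - φ y)}

/-- Outside `conjugateDomain φ` the supremum is unbounded and `⨆` takes the junk value `0`. -/
def convexConjugate (φ : V → ℝ) (p : V) : ℝ :=
  ⨆ y, ⟪p, y⟫ - φ y

variable {φ : V → ℝ} {p q x : V}

theorem le_convexConjugate (hp : p ∈ conjugateDomain φ) (y : V) :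
    ⟪p, y⟫ - φ y ≤ convexConjugate φ p :=
  le_ciSup hp y

theorem inner_smul_add_smul_sub_le_convexConjugate (hp : p ∈ conjugateDomain φ)
    (hq : q ∈ conjugateDomain φ) {a b : ℝ} (ha : 0 ≤ a) (hb : 0 ≤ b) (hab : a + b = 1)
    (y : V) :
    ⟪a • p + b • q, y⟫ - φ y ≤ a * convexConjugate φ p + b * convexConjugate φ q := by
  have hp' := mul_le_mul_of_nonneg_left (le_convexConjugate hp y) ha
  have hq' := mul_le_mul_of_nonneg_left (le_convexConjugate hq y) hb
  rw [inner_add_left, real_inner_smul_left, real_inner_smul_left]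
  linear_combination hp' + hq' + φ y * hab

theorem convexOn_convexConjugate :
    ConvexOn ℝ (conjugateDomain φ) (convexConjugate φ) := by
  refine ⟨fun p hp q hq a b ha hb hab => ?_, fun p hp q hq a b ha hb hab => ?_⟩ <;>
    have hbound := inner_smul_add_smul_sub_le_convexConjugate hp hq ha hb hab
  · exact ⟨_, forall_mem_range.mpr hbound⟩
  · exact ciSup_le hbound

theorem inner_sub_le_of_subgradient (hpx : ∀ y, φ x + ⟪p, y - x⟫ ≤ φ y) (y : V) :
    ⟪p, y⟫ - φ y ≤ ⟪p, x⟫ - φ x := by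
  have := hpx y
  rw [inner_sub_right] at this
  linarith

theorem mem_conjugateDomain_of_subgradient (hpx : ∀ y, φ x + ⟪p, y - x⟫ ≤ φ y) :
    p ∈ conjugateDomain φ :=
  ⟨_, forall_mem_range.mpr (inner_sub_le_of_subgradient hpx)⟩

theorem convexConjugate_eq_of_subgradient (hpx : ∀ y, φ x + ⟪p, y - x⟫ ≤ φ y) :
    convexConjugate φ p = ⟪p, x⟫ - φ x :=
  le_antisymm (ciSup_le (inner_sub_le_of_subgradient hpx))
    (le_convexConjugate (mem_conjugateDomain_of_subgradient hpx) x)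

/-- Fenchel–Young: `p ∈ ∂φ(x)` gives `x ∈ ∂φ*(p)`. -/
theorem convexConjugate_add_inner_le (hpx : ∀ y, φ x + ⟪p, y - x⟫ ≤ φ y)
    (hq : q ∈ conjugateDomain φ) :
    convexConjugate φ p + ⟪x, q - p⟫ ≤ convexConjugate φ q := by
  have := le_convexConjugate hq x
  rw [convexConjugate_eq_of_subgradient hpx, inner_sub_right, real_inner_comm q x,
    real_inner_comm p x]
  linarith

def conjugateSingularSet (φ : V → ℝ) : Set V :=
  (interior (conjugateDomain φ) \ {p | DifferentiableAt ℝ (convexConjugate φ) p}) ∪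
    frontier (conjugateDomain φ)

/-- Off `conjugateSingularSet φ`, `∇φ*` inverts the subdifferential of `φ`. -/
theorem eq_of_subgradient_of_notMem_conjugateSingularSet {y : V}
    (hpx : ∀ z, φ x + ⟪p, z - x⟫ ≤ φ z) (hpy : ∀ z, φ y + ⟪p, z - y⟫ ≤ φ z)
    (hp : p ∉ conjugateSingularSet φ) : x = y := by
  have hdom := mem_conjugateDomain_of_subgradient hpx
  have hint : p ∈ interior (conjugateDomain φ) := by
    by_contra h
    exact hp (Or.inr ⟨subset_closure hdom, h⟩)
  have hdiff : DifferentiableAt ℝ (convexConjugate φ) p := by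
    by_contra h
    exact hp (Or.inl ⟨hint, h⟩)
  have hnhds : ∀ᶠ q in 𝓝 p, q ∈ conjugateDomain φ :=
    mem_of_superset (isOpen_interior.mem_nhds hint) interior_subset
  exact eq_of_eventually_subgradient_of_differentiableAt hdiff
    (hnhds.mono fun q => convexConjugate_add_inner_le hpx)
    (hnhds.mono fun q => convexConjugate_add_inner_le hpy)

variable [MeasurableSpace V] [BorelSpace V]

theorem measurableSet_conjugateSingularSet (φ : V → ℝ) :
    MeasurableSet (conjugateSingularSet φ) :=
  (isOpen_interior.measurableSet.diff (measurableSet_of_differentiableAt ℝ _)).union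
    isClosed_frontier.measurableSet

theorem measure_conjugateSingularSet [FiniteDimensional ℝ V] (μ : Measure V)
    [μ.IsAddHaarMeasure] (φ : V → ℝ) : μ (conjugateSingularSet φ) = 0 := by
  have hdiff := ae_iff.mp <|
    (convexOn_convexConjugate (φ := φ)).ae_differentiableAt_of_mem_interior (μ := μ)
  refine measure_union_null (measure_mono_null ?_ hdiff)
    (convexOn_convexConjugate.1.addHaar_frontier μ)
  exact fun _ hp h => hp.2 (h hp.1)

end ConvexConjugate

section Subdifferential

variable {d : ℕ}

theorem subdiffE_coe (φ : E d → ℝ) : subdiffE (fun x => (φ x : EReal)) = subdiffR φ := by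
  ext x ξ
  simp only [subdiffE, subdiffR, mem_ofPred_eq, ← EReal.coe_add, EReal.coe_le_coe_iff]

/-- In the second case `ψ` is identically `⊥` or identically `⊤`. -/
theorem exists_eq_coe_or_subdiffE_eq_univ {ψ : E d → EReal}
    (hne : ∀ x, (subdiffE ψ x).Nonempty) :
    (∃ φ : E d → ℝ, ψ = fun x => (φ x : EReal)) ∨ ∀ x, subdiffE ψ x = univ := by
  by_cases hfin : ∀ x, ψ x ≠ ⊥ ∧ ψ x ≠ ⊤
  · exact .inl ⟨fun x => (ψ x).toReal,
      funext fun x => (EReal.coe_toReal (hfin x).2 (hfin x).1).symm⟩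
  push Not at hfin
  obtain ⟨z, hz⟩ := hfin
  refine .inr fun x => eq_univ_of_forall fun ξ y => ?_
  rcases eq_or_ne (ψ z) ⊥ with hbot | hbot
  · obtain ⟨η, hη⟩ := hne x
    have hx := hη z
    rw [hbot, le_bot_iff, EReal.add_eq_bot_iff] at hx
    rw [hx.resolve_right (EReal.coe_ne_bot _), EReal.bot_add]
    exact bot_le
  · obtain ⟨η, hη⟩ := hne z
    have hy := hη y
    rw [hz hbot, EReal.top_add_coe, top_le_iff] at hy
    rw [hy]
    exact le_top

theorem exists_null_eq_of_mem_subdiffE {ψ : E d → EReal} (hne : ∀ x, (subdiffE ψ x).Nonempty)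
    (hae : ∀ᵐ x, (subdiffE ψ x).Subsingleton) :
    ∃ N : Set (E d), MeasurableSet N ∧ volume N = 0 ∧
      ∀ ⦃p x y⦄, p ∉ N → p ∈ subdiffE ψ x → p ∈ subdiffE ψ y → x = y := by
  rcases exists_eq_coe_or_subdiffE_eq_univ hne with ⟨φ, rfl⟩ | huniv
  · refine ⟨conjugateSingularSet φ, measurableSet_conjugateSingularSet φ,
      measure_conjugateSingularSet volume φ, fun p x y hp hpx hpy => ?_⟩
    rw [subdiffE_coe] at hpx hpy
    exact eq_of_subgradient_of_notMem_conjugateSingularSet hpx hpy hp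
  · obtain ⟨z, hz⟩ := hae.exists
    exact ⟨∅, MeasurableSet.empty, measure_empty, fun p x y _ _ _ =>
      (huniv z ▸ hz) (mem_univ x) (mem_univ y)⟩

end Subdifferential

section ChangeOfVariables

variable {α β : Type*} [MeasurableSpace α] [MeasurableSpace β]
  {μ : Measure α} {ν : Measure β}

theorem ae_apply_notMem_of_map_withDensity {f : α → ℝ} {g : β → ℝ} {Q : α → β}
    (hf : ∀ x, 0 < f x) (hfm : Measurable f) (hQm : Measurable Q)
    (hpush : (μ.withDensity fun x => ENNReal.ofReal (f x)).map Q =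
      ν.withDensity fun y => ENNReal.ofReal (g y))
    {N : Set β} (hN : ν N = 0) : ∀ᵐ x ∂μ, Q x ∉ N := by
  have hνN : ∀ᵐ y ∂(μ.withDensity fun x => ENNReal.ofReal (f x)).map Q, y ∉ N := by
    rw [hpush]
    exact withDensity_absolutelyContinuous _ _ (measure_eq_zero_iff_ae_notMem.mp hN)
  exact (withDensity_absolutelyContinuous' hfm.ennreal_ofReal.aemeasurable
    (ae_of_all _ fun x => (ENNReal.ofReal_pos.mpr (hf x)).ne')).ae_le
    (ae_of_ae_map (p := (· ∉ N)) hQm.aemeasurable hνN)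

variable [StandardBorelSpace α] [MeasurableSpace.CountablySeparated β]

theorem measure_image_eq_setLIntegral_div {f : α → ℝ} {g : β → ℝ} {Q : α → β}
    (hfm : Measurable f) (hgm : Measurable g) (hg : ∀ y, 0 < g y) (hQm : Measurable Q)
    (hpush : (μ.withDensity fun x => ENNReal.ofReal (f x)).map Q =
      ν.withDensity fun y => ENNReal.ofReal (g y))
    {S : Set β} (hinj : InjOn Q (Q ⁻¹' S)) ⦃Z : Set α⦄ (hZ : MeasurableSet Z)
    (hZS : Z ⊆ Q ⁻¹' S) :
    ν (Q '' Z) = ∫⁻ x in Z, ENNReal.ofReal (f x / g (Q x)) ∂μ := by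
  have hQZ : MeasurableSet (Q '' Z) := hZ.image_of_measurable_injOn hQm (hinj.mono hZS)
  have hpre : Q ⁻¹' (Q '' Z) = Z :=
    (inter_eq_left.mpr (preimage_mono (image_subset_iff.mpr hZS))).symm.trans
      (hinj.preimage_image_inter hZS)
  have hinvg : Measurable fun y => ENNReal.ofReal (1 / g y) :=
    (measurable_const.div hgm).ennreal_ofReal
  calc ν (Q '' Z) = ∫⁻ y in Q '' Z, ENNReal.ofReal (g y) * ENNReal.ofReal (1 / g y) ∂ν := by
        rw [← setLIntegral_one]
        refine setLIntegral_congr_fun hQZ fun y _ => ?_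
        rw [← ENNReal.ofReal_mul (hg y).le, mul_one_div_cancel (hg y).ne', ENNReal.ofReal_one]
    _ = ∫⁻ y in Q '' Z, ENNReal.ofReal (1 / g y)
          ∂(μ.withDensity fun x => ENNReal.ofReal (f x)).map Q := by
        rw [hpush, restrict_withDensity hQZ,
          lintegral_withDensity_eq_lintegral_mul _ hgm.ennreal_ofReal hinvg]
        rfl
    _ = ∫⁻ x in Z, ENNReal.ofReal (f x) * ENNReal.ofReal (1 / g (Q x)) ∂μ := by
        rw [setLIntegral_map hQZ hinvg hQm, hpre, restrict_withDensity hZ]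
        exact lintegral_withDensity_eq_lintegral_mul _ hfm.ennreal_ofReal (hinvg.comp hQm)
    _ = ∫⁻ x in Z, ENNReal.ofReal (f x / g (Q x)) ∂μ := by
        refine setLIntegral_congr_fun hZ fun x _ => ?_
        rw [← ENNReal.ofReal_mul' (one_div_nonneg.mpr (hg (Q x)).le), mul_one_div]

theorem measure_image_inter_eq_setLIntegral_div {f : α → ℝ} {g : β → ℝ} {Q : α → β}
    (hf : ∀ x, 0 < f x) (hfm : Measurable f) (hgm : Measurable g) (hg : ∀ y, 0 < g y)
    (hQm : Measurable Q)
    (hpush : (μ.withDensity fun x => ENNReal.ofReal (f x)).map Q =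
      ν.withDensity fun y => ENNReal.ofReal (g y))
    {N : Set β} (hNm : MeasurableSet N) (hN : ν N = 0) (hinj : InjOn Q (Q ⁻¹' Nᶜ))
    {S : Set α} (hS : ∀ᵐ x ∂μ, x ∈ S) {A : Set α} (hA : MeasurableSet A) :
    ν (Q '' (A ∩ S)) = ∫⁻ x in A, ENNReal.ofReal (f x / g (Q x)) ∂μ := by
  have hgood := ae_apply_notMem_of_map_withDensity hf hfm hQm hpush hN
  obtain ⟨T, hTae, hTm, hT⟩ := (hgood.and hS).exists_measurable_mem
  have key := measure_image_eq_setLIntegral_div hfm hgm hg hQm hpush hinj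
  refine le_antisymm ?_ ?_
  · calc ν (Q '' (A ∩ S)) ≤ ν (Q '' (A ∩ Q ⁻¹' Nᶜ) ∪ N) := by
          refine measure_mono ?_
          rintro _ ⟨x, hx, rfl⟩
          by_cases hxN : Q x ∈ N
          · exact .inr hxN
          · exact .inl ⟨x, ⟨hx.1, hxN⟩, rfl⟩
      _ ≤ ν (Q '' (A ∩ Q ⁻¹' Nᶜ)) := by
          simpa [hN] using measure_union_le (μ := ν) (Q '' (A ∩ Q ⁻¹' Nᶜ)) N
      _ = ∫⁻ x in A ∩ Q ⁻¹' Nᶜ, ENNReal.ofReal (f x / g (Q x)) ∂μ :=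
          key (hA.inter (hNm.compl.preimage hQm)) inter_subset_right
      _ = ∫⁻ x in A, ENNReal.ofReal (f x / g (Q x)) ∂μ :=
          setLIntegral_congr (inter_ae_eq_left_of_ae_eq_univ (ae_eq_univ.mpr hgood))
  · calc ∫⁻ x in A, ENNReal.ofReal (f x / g (Q x)) ∂μ
        = ∫⁻ x in A ∩ T, ENNReal.ofReal (f x / g (Q x)) ∂μ :=
          setLIntegral_congr (inter_ae_eq_left_of_ae_eq_univ (ae_eq_univ.mpr hTae)).symm
      _ = ν (Q '' (A ∩ T)) := (key (hA.inter hTm) fun x hx => (hT x hx.2).1).symm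
      _ ≤ ν (Q '' (A ∩ S)) :=
          measure_mono (image_mono (inter_subset_inter_right _ fun x hx => (hT x hx).2))

end ChangeOfVariables

theorem statement18_general {d : ℕ} (f g : E d → ℝ)
    (hf : ∀ x, 0 < f x) (hg : ∀ x, 0 < g x)
    (hfm : Measurable f) (hgm : Measurable g)
    (μ ν : Measure (E d))
    (hμ : μ = (volume : Measure (E d)).withDensity (fun x => ENNReal.ofReal (f x)))
    (hν : ν = (volume : Measure (E d)).withDensity (fun x => ENNReal.ofReal (g x)))
    (ψ : E d → EReal)
    (Q : E d → E d) (hQm : Measurable Q) (hQ : ∀ x, Q x ∈ subdiffE ψ x)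
    (hae : ∀ᵐ x ∂(volume : Measure (E d)), subdiffE ψ x = {Q x})
    (hpush : Measure.map Q μ = ν) :
    ∀ A : Set (E d), MeasurableSet A →
      (volume : Measure (E d)) (Q '' (A ∩ {x | subdiffE ψ x = {Q x}})) =
        ∫⁻ x in A, ENNReal.ofReal (f x / g (Q x)) := by
  subst hμ hν
  obtain ⟨N, hNm, hN0, hN⟩ := exists_null_eq_of_mem_subdiffE (fun x => ⟨Q x, hQ x⟩)
    (hae.mono fun x hx => hx ▸ subsingleton_singleton)
  exact fun A hA => measure_image_inter_eq_setLIntegral_div hf hfm hgm hg hQm hpush hNm hN0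
    (fun x hx y _ hxy => hN hx (hQ x) (hxy ▸ hQ y)) hae hA

/-- Monge–Ampère equation: if `μ, ν` have positive Lebesgue densities `f, g`
and `Q = ∇ψ` (a.e. gradient selection of a convex `ψ`) pushes `μ` forward to `ν`, then the
measure `ρ_Q(A) := Leb(Q(A))` (image taken over differentiability points of `ψ`) satisfies
`ρ_Q(A) = ∫_A f(x)/g(Q(x)) dx` for every Borel set `A`. -/
theorem statement18 {d : ℕ} (f g : E d → ℝ)
    (hf : ∀ x, 0 < f x) (hg : ∀ x, 0 < g x)
    (hfm : Measurable f) (hgm : Measurable g)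
    (μ ν : Measure (E d)) [IsProbabilityMeasure μ] [IsProbabilityMeasure ν]
    (hμ : μ = (volume : Measure (E d)).withDensity (fun x => ENNReal.ofReal (f x)))
    (hν : ν = (volume : Measure (E d)).withDensity (fun x => ENNReal.ofReal (g x)))
    (ψ : E d → EReal) (hbot : ∀ x, ψ x ≠ ⊥) (hconv : ConvexE ψ)
    (Q : E d → E d) (hQm : Measurable Q) (hQ : ∀ x, Q x ∈ subdiffE ψ x)
    (hae : ∀ᵐ x ∂(volume : Measure (E d)), subdiffE ψ x = {Q x})
    (hpush : Measure.map Q μ = ν) :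
    ∀ A : Set (E d), MeasurableSet A →
      (volume : Measure (E d)) (Q '' (A ∩ {x | subdiffE ψ x = {Q x}})) =
        ∫⁻ x in A, ENNReal.ofReal (f x / g (Q x)) :=
  statement18_general f g hf hg hfm hgm μ ν hμ hν ψ Q hQm hQ hae hpush
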